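/- In particular, the Heisenberg-type group G of type (d₁,…,d_p) has a unique irreducible weight-1 module up to isomorphism, and it has dimension d₁⋯d_p. -/

import Mathlib

abbrev ThetaK1 (p : ℕ) (d : Fin p → ℕ) : Type := ∀ i : Fin p, Multiplicative (ZMod (d i))

abbrev ThetaK2 (k : Type) [Field k] (p : ℕ) (d : Fin p → ℕ) : Type := ThetaK1 p d →* kˣ

def Heis (k : Type) [Field k] (p : ℕ) (d : Fin p → ℕ) : Type :=
  kˣ × ThetaK1 p d × ThetaK2 k p d

namespace Heis

variable {k : Type} [Field k] {p : ℕ} {d : Fin p → ℕ}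

def mk (α : kˣ) (x : ThetaK1 p d) (χ : ThetaK2 k p d) : Heis k p d := (α, x, χ)

instance : Mul (Heis k p d) :=
  ⟨fun a b => (a.1 * b.1 * b.2.2 a.2.1, a.2.1 * b.2.1, a.2.2 * b.2.2)⟩

instance : One (Heis k p d) := ⟨((1 : kˣ), 1, 1)⟩

instance : Inv (Heis k p d) := ⟨fun a => (a.1⁻¹ * a.2.2 a.2.1, a.2.1⁻¹, a.2.2⁻¹)⟩

theorem mul_def (a b : Heis k p d) :
    a * b = (a.1 * b.1 * b.2.2 a.2.1, a.2.1 * b.2.1, a.2.2 * b.2.2) := rfl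

theorem one_def : (1 : Heis k p d) = ((1 : kˣ), 1, 1) := rfl

theorem inv_def (a : Heis k p d) :
    a⁻¹ = (a.1⁻¹ * a.2.2 a.2.1, a.2.1⁻¹, a.2.2⁻¹) := rfl

theorem mul_assoc' (a b c : Heis k p d) : a * b * c = a * (b * c) := by
  obtain ⟨α, x, χ⟩ := a
  obtain ⟨β, y, ψ⟩ := b
  obtain ⟨γ, z, ω⟩ := c
  refine Prod.ext ?_ (Prod.ext ?_ ?_)
  · show α * β * ψ x * γ * (ω (x * y)) = α * (β * γ * ω y) * ((ψ * ω) x)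
    simp [map_mul, MonoidHom.mul_apply, mul_assoc, mul_comm, mul_left_comm]
  · exact mul_assoc x y z
  · exact mul_assoc χ ψ ω

theorem one_mul' (a : Heis k p d) : 1 * a = a := by
  obtain ⟨α, x, χ⟩ := a
  refine Prod.ext ?_ (Prod.ext ?_ ?_)
  · show 1 * α * χ 1 = α
    simp
  · exact one_mul x
  · exact one_mul χ

theorem mul_one' (a : Heis k p d) : a * 1 = a := by
  obtain ⟨α, x, χ⟩ := a
  refine Prod.ext ?_ (Prod.ext ?_ ?_)
  · show α * 1 * (1 : ThetaK2 k p d) x = α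
    simp
  · exact mul_one x
  · exact mul_one χ

theorem inv_mul_cancel' (a : Heis k p d) : a⁻¹ * a = 1 := by
  obtain ⟨α, x, χ⟩ := a
  refine Prod.ext ?_ (Prod.ext ?_ ?_)
  · show α⁻¹ * χ x * α * χ (x⁻¹) = 1
    simp [map_inv, mul_comm, mul_left_comm]
  · exact inv_mul_cancel x
  · exact inv_mul_cancel χ

instance : Group (Heis k p d) where
  mul_assoc := mul_assoc'
  one_mul := one_mul'
  mul_one := mul_one'
  inv_mul_cancel := inv_mul_cancel'

/-- The multiplication rule of the Heisenberg-type group. -/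
theorem mk_mul (α β : kˣ) (x y : ThetaK1 p d) (χ ψ : ThetaK2 k p d) :
    mk α x χ * mk β y ψ = mk (α * β * ψ x) (x * y) (χ * ψ) := rfl

end Heis

section Reps

variable {k : Type} [Field k]

/-- A subspace stable under a representation. -/
def RepStable {G V : Type} [Group G] [AddCommGroup V] [Module k V]
    (ρ : G →* (V →ₗ[k] V)ˣ) (W : Submodule k V) : Prop :=
  ∀ (g : G), ∀ w ∈ W, (ρ g : V →ₗ[k] V) w ∈ W

/-- Irreducibility: nonzero and no nontrivial stable subspace. -/
def RepIrred {G V : Type} [Group G] [AddCommGroup V] [Module k V]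
    (ρ : G →* (V →ₗ[k] V)ˣ) : Prop :=
  (∃ v : V, v ≠ 0) ∧
  ∀ W : Submodule k V, RepStable ρ W → W = ⊥ ∨ W = ⊤

/-- Isomorphism of representations of `G`. -/
def RepIso {G V W : Type} [Group G] [AddCommGroup V] [Module k V]
    [AddCommGroup W] [Module k W]
    (ρ : G →* (V →ₗ[k] V)ˣ) (τ : G →* (W →ₗ[k] W)ˣ) : Prop :=
  ∃ e : V ≃ₗ[k] W, ∀ (g : G) (v : V), e ((ρ g : V →ₗ[k] V) v) = (τ g : W →ₗ[k] W) (e v)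

variable {p : ℕ} {d : Fin p → ℕ}

/-- A representation of the Heisenberg-type group has weight `n` if `kˣ ⊆ G` acts through the
character `α ↦ αⁿ`. -/
def IsWeight (n : ℤ) {V : Type} [AddCommGroup V] [Module k V]
    (ρ : Heis k p d →* (V →ₗ[k] V)ˣ) : Prop :=
  ∀ (α : kˣ) (v : V), (ρ (Heis.mk α 1 1) : V →ₗ[k] V) v = ((α ^ n : kˣ) : k) • v

/-- `D n = (d₁⋯d_p)/(gcd(n,d₁)⋯gcd(n,d_p))`. -/
def ThetaD (p : ℕ) (d : Fin p → ℕ) (n : ℤ) : ℕ :=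
  (∏ i, d i) / ∏ i, Int.gcd n (d i)

end Reps

/-!
Restricted to `K₁`, a weight-1 representation splits into eigenspaces of the characters
`χ ∈ K₂`, and the commutation rule `(1,x,1)(1,1,χ) = χ(x) (1,1,χ)(1,x,1)` shows that `(1,1,χ)`
carries the `ψ`-eigenspace onto the `χψ`-eigenspace. Projecting any nonzero vector onto an
eigenspace and moving it back with `K₂` gives a nonzero `K₁`-fixed vector `w₀`; the vectors
`(1,1,χ) w₀` are eigenvectors for distinct characters, hence independent, and span an invariant
subspace. In an irreducible module they therefore form a basis on which `G` acts by
`(α,x,χ') b_χ = α χ(x) b_{χ'χ}`, so all irreducible weight-1 modules are isomorphic, of dimension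
`|K₂| = d₁⋯d_p`; conversely this formula defines an irreducible weight-1 module.
The condition `char k ∤ dᵢ` makes `|K₁|` invertible in `k` and provides the roots of unity for
characters to separate the points of `K₁`.
-/

section Characters

variable {k A : Type*} [Field k] [CommGroup A] [Fintype A]

theorem sum_units_hom_eq_zero {χ : A →* kˣ} (hχ : χ ≠ 1) : ∑ a, (χ a : k) = 0 :=
  sum_hom_units_eq_zero ((Units.coeHom k).comp χ) fun h =>
    hχ <| MonoidHom.ext fun a => Units.ext <| by simpa using DFunLike.congr_fun h a

theorem sum_units_hom_apply_eq_zero [Fintype (A →* kˣ)]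
    [HasEnoughRootsOfUnity k (Monoid.exponent A)] {a : A} (ha : a ≠ 1) :
    ∑ χ : A →* kˣ, (χ a : k) = 0 := by
  obtain ⟨χ, hχ⟩ := CommGroup.exists_apply_ne_one_of_hasEnoughRootsOfUnity A k ha
  exact sum_units_hom_eq_zero (χ := MonoidHom.eval a) fun h => hχ (DFunLike.congr_fun h χ)

theorem hasEnoughRootsOfUnity_exponent [IsSepClosed k] (hA : (Fintype.card A : k) ≠ 0) :
    HasEnoughRootsOfUnity k (Monoid.exponent A) := by
  obtain ⟨m, hm⟩ := Group.exponent_dvd_card (G := A)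
  have : NeZero (Monoid.exponent A : k) := ⟨fun h => hA (by rw [hm, Nat.cast_mul, h, zero_mul])⟩
  infer_instance

variable {V : Type*} [AddCommGroup V] [Module k V] (T : A →* Module.End k V)

/-- `|A|` times the projection onto the `ψ`-eigenspace of `T`. -/
def charProj (ψ : A →* kˣ) : Module.End k V :=
  ∑ x, (ψ x⁻¹ : k) • T x

theorem charProj_apply (ψ : A →* kˣ) (v : V) :
    charProj T ψ v = ∑ x, (ψ x⁻¹ : k) • T x v := by
  simp [charProj]

theorem map_charProj_apply (ψ : A →* kˣ) (y : A) (v : V) :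
    T y (charProj T ψ v) = (ψ y : k) • charProj T ψ v := by
  simp only [charProj_apply, map_sum, map_smul, Finset.smul_sum, smul_smul,
    ← Module.End.mul_apply, ← map_mul]
  refine Fintype.sum_equiv (Equiv.mulLeft y) _ _ fun x => ?_
  simp [mul_comm]

theorem charProj_apply_of_eigen {χ : A →* kˣ} {u : V} (hu : ∀ x, T x u = (χ x : k) • u)
    (ψ : A →* kˣ) [Decidable (χ = ψ)] :
    charProj T ψ u = if χ = ψ then (Fintype.card A : k) • u else 0 := by
  have : charProj T ψ u = (∑ x, ((χ * ψ⁻¹) x : k)) • u := by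
    simp [charProj_apply, hu, smul_smul, Finset.sum_smul, mul_comm]
  rw [this]
  split_ifs with h
  · simp [h]
  · rw [sum_units_hom_eq_zero (mul_inv_eq_one.not.mpr h), zero_smul]

theorem charProj_sum_smul_of_eigen [Fintype (A →* kˣ)] {u : (A →* kˣ) → V}
    (hu : ∀ χ x, T x (u χ) = (χ x : k) • u χ) (c : (A →* kˣ) → k) (ψ : A →* kˣ) :
    charProj T ψ (∑ χ, c χ • u χ) = ((Fintype.card A : k) * c ψ) • u ψ := by
  classical
  simp [map_sum, charProj_apply_of_eigen T (hu _), smul_smul, mul_comm]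

theorem sum_charProj [Fintype (A →* kˣ)] [HasEnoughRootsOfUnity k (Monoid.exponent A)] :
    ∑ ψ : A →* kˣ, charProj T ψ = (Fintype.card A : k) • 1 := by
  have hcard : Fintype.card (A →* kˣ) = Fintype.card A := by
    simpa [Nat.card_eq_fintype_card] using CommGroup.card_monoidHom_of_hasEnoughRootsOfUnity A k
  simp only [charProj]
  rw [Finset.sum_comm]
  simp only [← Finset.sum_smul]
  rw [Finset.sum_eq_single (1 : A) (fun x _ hx => by
    rw [sum_units_hom_apply_eq_zero (inv_ne_one.mpr hx), zero_smul]) (by simp)]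
  simp [hcard]

variable {T}

theorem linearIndependent_of_eigen (hA : (Fintype.card A : k) ≠ 0) {u : (A →* kˣ) → V}
    (hu0 : ∀ χ, u χ ≠ 0) (hu : ∀ χ x, T x (u χ) = (χ x : k) • u χ) :
    LinearIndependent k u := by
  have := Fintype.ofFinite (A →* kˣ)
  refine Fintype.linearIndependent_iff.mpr fun c hc ψ => ?_
  have h := charProj_sum_smul_of_eigen T hu c ψ
  rw [hc, map_zero, eq_comm, smul_eq_zero] at h
  exact (mul_eq_zero.mp (h.resolve_right (hu0 ψ))).resolve_left hA

theorem exists_charProj_apply_ne_zero [HasEnoughRootsOfUnity k (Monoid.exponent A)]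
    (hA : (Fintype.card A : k) ≠ 0) {v : V} (hv : v ≠ 0) : ∃ ψ, charProj T ψ v ≠ 0 := by
  have := Fintype.ofFinite (A →* kˣ)
  by_contra! h
  have := congr($(sum_charProj T) v)
  simp only [LinearMap.sum_apply, h, Finset.sum_const_zero] at this
  exact smul_ne_zero hA hv (by simpa using this.symm)

theorem exists_basis_mem_of_ne_zero_mem (hA : (Fintype.card A : k) ≠ 0)
    {b : Module.Basis (A →* kˣ) k V} (hb : ∀ χ x, T x (b χ) = (χ x : k) • b χ)
    {W : Submodule k V} (hW : ∀ x, ∀ w ∈ W, T x w ∈ W) {w : V} (hwW : w ∈ W) (hw : w ≠ 0) :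
    ∃ ψ, b ψ ∈ W := by
  have := Fintype.ofFinite (A →* kˣ)
  obtain ⟨ψ, hψ⟩ : ∃ ψ, b.repr w ψ ≠ 0 := by
    by_contra! h
    exact hw (b.repr.injective (by ext ψ; simp [h]))
  have hproj : charProj T ψ w ∈ W := by
    rw [charProj_apply]
    exact Submodule.sum_mem _ fun x _ => Submodule.smul_mem _ _ (hW x w hwW)
  rw [← b.sum_repr w, charProj_sum_smul_of_eigen T hb] at hproj
  exact ⟨ψ, (Submodule.smul_mem_iff _ (mul_ne_zero hA hψ)).mp hproj⟩

end Characters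

theorem units_apply_ne_zero {k V : Type*} [Field k] [AddCommGroup V] [Module k V]
    (u : (V →ₗ[k] V)ˣ) {v : V} (hv : v ≠ 0) : (u : V →ₗ[k] V) v ≠ 0 :=
  (map_ne_zero_iff _ ((Module.End.isUnit_iff _).mp u.isUnit).injective).mpr hv


theorem card_thetaK1 {p : ℕ} {d : Fin p → ℕ} [∀ i, NeZero (d i)] :
    Fintype.card (ThetaK1 p d) = ∏ i, d i := by
  simp [Fintype.card_pi, ZMod.card]

namespace Heis

variable {k : Type} [Field k] {p : ℕ} {d : Fin p → ℕ}

def ofK1 : ThetaK1 p d →* Heis k p d where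
  toFun x := mk 1 x 1
  map_one' := rfl
  map_mul' x y := by
    simp only [mk_mul, mul_one, MonoidHom.one_apply]
    exact congrArg (mk 1 (x * y)) (mul_one (1 : ThetaK2 k p d)).symm

theorem mk_mul_mk_one_one (α : kˣ) (x : ThetaK1 p d) (χ' χ : ThetaK2 k p d) :
    mk α x χ' * mk 1 1 χ = mk (α * χ x) 1 1 * (mk 1 1 (χ' * χ) * ofK1 x) := by
  refine Prod.ext ?_ (Prod.ext ?_ ?_)
  · show α * 1 * χ x = α * χ x * (1 * 1 * (1 : ThetaK2 k p d) 1) * (χ' * χ * 1) 1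
    simp
  · show x * 1 = 1 * (1 * x)
    simp
  · show χ' * χ = (1 : ThetaK2 k p d) * (χ' * χ * 1)
    exact ((one_mul (χ' * χ * 1)).trans (mul_one (χ' * χ))).symm

end Heis

section Schrodinger

variable {k : Type} [Field k] {p : ℕ} {d : Fin p → ℕ} {V : Type} [AddCommGroup V] [Module k V]

def restrictK1 (ρ : Heis k p d →* (V →ₗ[k] V)ˣ) : ThetaK1 p d →* Module.End k V :=
  (Units.coeHom _).comp (ρ.comp Heis.ofK1)

theorem restrictK1_apply (ρ : Heis k p d →* (V →ₗ[k] V)ˣ) (x : ThetaK1 p d) (v : V) :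
    restrictK1 ρ x v = (ρ (Heis.mk 1 x 1) : V →ₗ[k] V) v :=
  rfl

/-- In the Schrödinger model on functions on `K₁`, `b χ` is the character `χ` itself. -/
def IsSchrodingerBasis (ρ : Heis k p d →* (V →ₗ[k] V)ˣ) (b : ThetaK2 k p d → V) : Prop :=
  ∀ α x χ' χ, (ρ (Heis.mk α x χ') : V →ₗ[k] V) (b χ) = ((α * χ x : kˣ) : k) • b (χ' * χ)

variable {ρ : Heis k p d →* (V →ₗ[k] V)ˣ}

theorem IsSchrodingerBasis.apply {b : ThetaK2 k p d → V} (hb : IsSchrodingerBasis ρ b)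
    (g : Heis k p d) (χ : ThetaK2 k p d) :
    (ρ g : V →ₗ[k] V) (b χ) = ((g.1 * χ g.2.1 : kˣ) : k) • b (g.2.2 * χ) :=
  hb g.1 g.2.1 g.2.2 χ

-- `simp` and `rw` do not find the group laws of `A →* kˣ` for a field `k` (an instance mismatch
-- in `kˣ`), so they are supplied as terms such as `one_mul χ`.
theorem IsSchrodingerBasis.restrictK1_apply {b : ThetaK2 k p d → V}
    (hb : IsSchrodingerBasis ρ b) (χ : ThetaK2 k p d) (x : ThetaK1 p d) :
    restrictK1 ρ x (b χ) = (χ x : k) • b χ :=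
  (hb 1 x 1 χ).trans (by simp [show (1 : ThetaK2 k p d) * χ = χ from one_mul χ])

theorem IsSchrodingerBasis.isWeight_one {b : Module.Basis (ThetaK2 k p d) k V}
    (hb : IsSchrodingerBasis ρ b) : IsWeight 1 ρ := by
  intro α v
  have : (ρ (Heis.mk α 1 1) : V →ₗ[k] V) = (α : k) • LinearMap.id :=
    b.ext fun χ => (hb α 1 1 χ).trans (by simp [show (1 : ThetaK2 k p d) * χ = χ from one_mul χ])
  simp [this]

theorem IsSchrodingerBasis.repStable_span {b : ThetaK2 k p d → V} (hb : IsSchrodingerBasis ρ b) :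
    RepStable ρ (Submodule.span k (Set.range b)) := by
  intro g w hw
  refine (Submodule.span_le (p := (Submodule.span k (Set.range b)).comap (ρ g : V →ₗ[k] V))).mpr
    ?_ hw
  rintro _ ⟨χ, rfl⟩
  rw [SetLike.mem_coe, Submodule.mem_comap, hb.apply]
  exact Submodule.smul_mem _ _ (Submodule.subset_span ⟨_, rfl⟩)

theorem IsSchrodingerBasis.repIrred [∀ i, NeZero (d i)]
    (hN : (Fintype.card (ThetaK1 p d) : k) ≠ 0) {b : Module.Basis (ThetaK2 k p d) k V}
    (hb : IsSchrodingerBasis ρ b) : RepIrred ρ := by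
  refine ⟨⟨b 1, b.ne_zero 1⟩, fun W hW => or_iff_not_imp_left.mpr fun hW0 => ?_⟩
  obtain ⟨w, hwW, hw⟩ := Submodule.exists_mem_ne_zero_of_ne_bot hW0
  obtain ⟨ψ, hψ⟩ := exists_basis_mem_of_ne_zero_mem hN hb.restrictK1_apply (fun x => hW _) hwW hw
  rw [eq_top_iff, ← b.span_eq, Submodule.span_le]
  rintro _ ⟨χ, rfl⟩
  have := hW (Heis.mk 1 1 (χ * ψ⁻¹)) _ hψ
  rwa [hb, show χ * ψ⁻¹ * ψ = χ from inv_mul_cancel_right χ ψ, map_one, Units.val_mul,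
    Units.val_one, one_mul, one_smul] at this

theorem IsSchrodingerBasis.repIso {W : Type} [AddCommGroup W] [Module k W]
    {τ : Heis k p d →* (W →ₗ[k] W)ˣ} {b : Module.Basis (ThetaK2 k p d) k V}
    {c : Module.Basis (ThetaK2 k p d) k W} (hb : IsSchrodingerBasis ρ b)
    (hc : IsSchrodingerBasis τ c) : RepIso ρ τ := by
  refine ⟨b.equiv c (Equiv.refl _), fun g v => ?_⟩
  have : (b.equiv c (Equiv.refl _)).toLinearMap ∘ₗ (ρ g : V →ₗ[k] V) =
      (τ g : W →ₗ[k] W) ∘ₗ (b.equiv c (Equiv.refl _)).toLinearMap :=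
    b.ext fun χ => by simp [hb.apply, hc.apply]
  exact LinearMap.congr_fun this v

noncomputable def schrodingerRep (b : Module.Basis (ThetaK2 k p d) k V) :
    Heis k p d →* (V →ₗ[k] V)ˣ :=
  MonoidHom.toHomUnits
    { toFun g := b.constr k fun χ => ((g.1 * χ g.2.1 : kˣ) : k) • b (g.2.2 * χ)
      map_one' := b.ext fun χ => by
        simp [Heis.one_def, show (1 : ThetaK2 k p d) * χ = χ from one_mul χ]
      map_mul' g h := b.ext fun χ => by
        simp only [Heis.mul_def, Module.Basis.constr_basis, Module.End.mul_apply, map_smul,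
          smul_smul]
        rw [show g.2.2 * h.2.2 * χ = g.2.2 * (h.2.2 * χ) from mul_assoc g.2.2 h.2.2 χ]
        congr 1
        simp only [map_mul, MonoidHom.mul_apply, Units.val_mul]
        ring }

theorem isSchrodingerBasis_schrodingerRep (b : Module.Basis (ThetaK2 k p d) k V) :
    IsSchrodingerBasis (schrodingerRep b) b :=
  fun _ _ _ χ => b.constr_basis k _ χ

theorem IsWeight.apply_mk_apply_mk_one_one (hw : IsWeight 1 ρ) (α : kˣ) (x : ThetaK1 p d)
    (χ' χ : ThetaK2 k p d) (v : V) :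
    (ρ (Heis.mk α x χ') : V →ₗ[k] V) ((ρ (Heis.mk 1 1 χ) : V →ₗ[k] V) v) =
      ((α * χ x : kˣ) : k) • (ρ (Heis.mk 1 1 (χ' * χ)) : V →ₗ[k] V) (restrictK1 ρ x v) := by
  rw [← Module.End.mul_apply, ← Units.val_mul, ← map_mul, Heis.mk_mul_mk_one_one, map_mul,
    map_mul, Units.val_mul, Units.val_mul, Module.End.mul_apply, Module.End.mul_apply, hw,
    zpow_one]
  rfl

theorem IsWeight.isSchrodingerBasis (hw : IsWeight 1 ρ) {w₀ : V}
    (hw₀ : ∀ x, restrictK1 ρ x w₀ = w₀) :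
    IsSchrodingerBasis ρ fun χ => (ρ (Heis.mk 1 1 χ) : V →ₗ[k] V) w₀ :=
  fun α x χ' χ => by rw [hw.apply_mk_apply_mk_one_one, hw₀]

theorem IsWeight.exists_fixed_ne_zero [∀ i, NeZero (d i)]
    [HasEnoughRootsOfUnity k (Monoid.exponent (ThetaK1 p d))]
    (hN : (Fintype.card (ThetaK1 p d) : k) ≠ 0) (hw : IsWeight 1 ρ) {v : V} (hv : v ≠ 0) :
    ∃ w₀ ≠ 0, ∀ x, restrictK1 ρ x w₀ = w₀ := by
  obtain ⟨ψ, hψ⟩ := exists_charProj_apply_ne_zero (T := restrictK1 ρ) hN hv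
  refine ⟨_, units_apply_ne_zero (ρ (Heis.mk 1 1 ψ⁻¹)) hψ, fun x => ?_⟩
  rw [restrictK1_apply, hw.apply_mk_apply_mk_one_one, map_charProj_apply, map_smul, smul_smul,
    show (1 : ThetaK2 k p d) * ψ⁻¹ = ψ⁻¹ from one_mul ψ⁻¹]
  simp

theorem IsWeight.exists_isSchrodingerBasis [∀ i, NeZero (d i)]
    [HasEnoughRootsOfUnity k (Monoid.exponent (ThetaK1 p d))]
    (hN : (Fintype.card (ThetaK1 p d) : k) ≠ 0) (hw : IsWeight 1 ρ) (hirr : RepIrred ρ) :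
    ∃ b : Module.Basis (ThetaK2 k p d) k V, IsSchrodingerBasis ρ b := by
  obtain ⟨v, hv⟩ := hirr.1
  obtain ⟨w₀, hw₀, hfix⟩ := hw.exists_fixed_ne_zero hN hv
  have hu := hw.isSchrodingerBasis hfix
  have hli := linearIndependent_of_eigen hN (fun χ => units_apply_ne_zero (ρ _) hw₀)
    hu.restrictK1_apply
  have hspan : ⊤ ≤ Submodule.span k (Set.range fun χ => (ρ (Heis.mk 1 1 χ) : V →ₗ[k] V) w₀) := by
    refine ((hirr.2 _ hu.repStable_span).resolve_left fun h => ?_).ge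
    have h1 : (ρ (Heis.mk 1 1 1) : V →ₗ[k] V) w₀ ∈ Submodule.span k (Set.range fun χ =>
        (ρ (Heis.mk 1 1 χ) : V →ₗ[k] V) w₀) := Submodule.subset_span ⟨1, rfl⟩
    exact units_apply_ne_zero (ρ _) hw₀ ((Submodule.mem_bot k).mp (h ▸ h1))
  exact ⟨.mk hli hspan, by rwa [Module.Basis.coe_mk]⟩

end Schrodinger

theorem stmt9_general {k : Type} [Field k] [IsAlgClosed k] {p : ℕ} {d : Fin p → ℕ}
    (hchar : ∀ i, ¬ (ringChar k ∣ d i)) :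
    -- existence of an irreducible weight-1 module
    (∃ ρ : Heis k p d →* ((Fin (∏ i, d i) → k) →ₗ[k] (Fin (∏ i, d i) → k))ˣ,
      IsWeight 1 ρ ∧ RepIrred ρ) ∧
    -- uniqueness up to isomorphism
    (∀ (V : Type) [AddCommGroup V] [Module k V] [FiniteDimensional k V]
      (W : Type) [AddCommGroup W] [Module k W] [FiniteDimensional k W]
      (ρ : Heis k p d →* (V →ₗ[k] V)ˣ) (τ : Heis k p d →* (W →ₗ[k] W)ˣ),
      IsWeight 1 ρ → RepIrred ρ → IsWeight 1 τ → RepIrred τ → RepIso ρ τ) ∧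
    -- every irreducible weight-1 module has dimension d₁⋯d_p
    (∀ (V : Type) [AddCommGroup V] [Module k V] [FiniteDimensional k V]
      (ρ : Heis k p d →* (V →ₗ[k] V)ˣ),
      IsWeight 1 ρ → RepIrred ρ → Module.finrank k V = ∏ i, d i) := by
  have : ∀ i, NeZero (d i) := fun i => ⟨fun h => hchar i (h ▸ dvd_zero _)⟩
  have hN : (Fintype.card (ThetaK1 p d) : k) ≠ 0 := by
    rw [card_thetaK1, Nat.cast_prod]
    exact Finset.prod_ne_zero_iff.mpr fun i _ => (ringChar.spec k (d i)).not.mpr (hchar i)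
  have := hasEnoughRootsOfUnity_exponent hN
  have hcard : Nat.card (ThetaK2 k p d) = ∏ i, d i := by
    rw [CommGroup.card_monoidHom_of_hasEnoughRootsOfUnity, Nat.card_eq_fintype_card, card_thetaK1]
  refine ⟨?_, fun V _ _ _ W _ _ _ ρ τ hρ hρ' hτ hτ' => ?_, fun V _ _ _ ρ hρ hρ' => ?_⟩
  · let b := (Pi.basisFun k (Fin (∏ i, d i))).reindex (Finite.equivFinOfCardEq hcard).symm
    exact ⟨schrodingerRep b, (isSchrodingerBasis_schrodingerRep b).isWeight_one,
      (isSchrodingerBasis_schrodingerRep b).repIrred hN⟩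
  · obtain ⟨b, hb⟩ := hρ.exists_isSchrodingerBasis hN hρ'
    obtain ⟨c, hc⟩ := hτ.exists_isSchrodingerBasis hN hτ'
    exact hb.repIso hc
  · obtain ⟨b, -⟩ := hρ.exists_isSchrodingerBasis hN hρ'
    rw [Module.finrank_eq_nat_card_basis b, hcard]

/-- The Heisenberg-type group `G` of type `(d₁,…,d_p)` has a unique irreducible
weight-1 module up to isomorphism, and it has dimension `d₁⋯d_p`. -/
theorem stmt9 {k : Type} [Field k] [IsAlgClosed k] {p : ℕ} {d : Fin p → ℕ}
    (hd0 : ∀ i, 0 < d i) (hchain : ∀ i j : Fin p, i ≤ j → d i ∣ d j)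
    (hchar : ∀ i, ¬ (ringChar k ∣ d i)) :
    -- existence of an irreducible weight-1 module
    (∃ ρ : Heis k p d →* ((Fin (∏ i, d i) → k) →ₗ[k] (Fin (∏ i, d i) → k))ˣ,
      IsWeight 1 ρ ∧ RepIrred ρ) ∧
    -- uniqueness up to isomorphism
    (∀ (V : Type) [AddCommGroup V] [Module k V] [FiniteDimensional k V]
      (W : Type) [AddCommGroup W] [Module k W] [FiniteDimensional k W]
      (ρ : Heis k p d →* (V →ₗ[k] V)ˣ) (τ : Heis k p d →* (W →ₗ[k] W)ˣ),
      IsWeight 1 ρ → RepIrred ρ → IsWeight 1 τ → RepIrred τ → RepIso ρ τ) ∧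
    -- every irreducible weight-1 module has dimension d₁⋯d_p
    (∀ (V : Type) [AddCommGroup V] [Module k V] [FiniteDimensional k V]
      (ρ : Heis k p d →* (V →ₗ[k] V)ˣ),
      IsWeight 1 ρ → RepIrred ρ → Module.finrank k V = ∏ i, d i) :=
  stmt9_general hchar
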